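/- Let R be a commutative ℚ-algebra, A a commutative R-algebra, and (ζ_j, ζ'_j)_{j∈J} (J finite) a family of R-linear derivations of A, all pairwise commuting. Set 𝒟 := Σ_{j∈J} ζ_j∘ζ'_j and 𝒯 := e^{(ħ/2)𝒟} := Σ_{n≥0} (ħ/2)^n 𝒟^n / n! acting coefficientwise on A[[ħ]]; 𝒯 is bijective with inverse e^{−(ħ/2)𝒟}. Then for all F, G ∈ A[[ħ]]: 𝒯(𝒯^{-1}(F) · 𝒯^{-1}(G)) = Σ_{n≥0} (ħ^n / (2^n · n!)) Σ_{j_1,…,j_n ∈ J} Σ_{ε ∈ {0,1}^n} (ζ^{(ε_1)}_{j_1}∘⋯∘ζ^{(ε_n)}_{j_n})(F) · (ζ^{(1−ε_1)}_{j_1}∘⋯∘ζ^{(1−ε_n)}_{j_n})(G), where ζ^{(0)}_j = ζ_j and ζ^{(1)}_j = ζ'_j. In other words, the product F ·_𝒯 G := 𝒯(𝒯^{-1}F · 𝒯^{-1}G) is the exponential product determined by the symmetrized bidifferential operator D(F⊗G) = (1/2) Σ_j (ζ_j F ⊗ ζ'_j G + ζ'_j F ⊗ ζ_j G). (This is the finite-rank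 case of the paper's Proposition that the time-ordered product defined by 𝒯 is the exponential product defined by the kernel iΔ^D.) -/

import Mathlib

/-- Iterated application of a family of derivations. -/
noncomputable def compDer {R A : Type*} [CommRing R] [CommRing A] [Algebra R A]
    {I : Type*} (ξ : I → Derivation R A A) : (k : ℕ) → (Fin k → I) → A → A
  | 0, _, a => a
  | k + 1, w, a => ξ (w 0) (compDer ξ k (fun i => w i.succ) a)

/-- The second-order differential operator `𝒟 = Σ_j ζ_j ∘ ζ'_j`. -/
noncomputable def Dop {R A : Type*} [CommRing R] [CommRing A] [Algebra R A]
    {J : Type*} [Fintype J] (ζ ζ' : J → Derivation R A A) : A → A :=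
  fun a => ∑ j : J, ζ j (ζ' j a)

/-- The operator `𝒯 = e^{(ħ/2)𝒟}` acting coefficientwise on `A[[ħ]]`. -/
noncomputable def Tmap {R A : Type*} [CommRing R] [CommRing A] [Algebra R A] [Algebra ℚ A]
    {J : Type*} [Fintype J] (ζ ζ' : J → Derivation R A A) (F : PowerSeries A) :
    PowerSeries A :=
  PowerSeries.mk fun N =>
    ∑ p ∈ Finset.HasAntidiagonal.antidiagonal N,
      ((2 : ℚ) ^ p.2 * (p.2.factorial : ℚ))⁻¹ • (Dop ζ ζ')^[p.2] (PowerSeries.coeff (R := A) p.1 F)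

/-- The operator `e^{-(ħ/2)𝒟}` acting coefficientwise on `A[[ħ]]`. -/
noncomputable def Tinv {R A : Type*} [CommRing R] [CommRing A] [Algebra R A] [Algebra ℚ A]
    {J : Type*} [Fintype J] (ζ ζ' : J → Derivation R A A) (F : PowerSeries A) :
    PowerSeries A :=
  PowerSeries.mk fun N =>
    ∑ p ∈ Finset.HasAntidiagonal.antidiagonal N,
      ((-1 : ℚ) ^ p.2 * ((2 : ℚ) ^ p.2 * (p.2.factorial : ℚ))⁻¹) •
        (Dop ζ ζ')^[p.2] (PowerSeries.coeff (R := A) p.1 F)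

/-- Selection of a derivation from the pair `(ζ_j, ζ'_j)` according to a Boolean flag:
`ζsel ζ ζ' (j, false) = ζ_j` and `ζsel ζ ζ' (j, true) = ζ'_j`. -/
noncomputable def ζsel {R A : Type*} [CommRing R] [CommRing A] [Algebra R A]
    {J : Type*} (ζ ζ' : J → Derivation R A A) : J × Bool → Derivation R A A :=
  fun p => if p.2 then ζ' p.1 else ζ p.1

/-- The exponential product determined by the symmetrized bidifferential operator
`D(F⊗G) = (1/2) Σ_j (ζ_j F ⊗ ζ'_j G + ζ'_j F ⊗ ζ_j G)`:
`F ⋆ G = Σ_n (ħ^n/(2^n n!)) Σ_{j⃗} Σ_{ε ∈ {0,1}^n}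
  (ζ^{(ε₁)}_{j₁}∘⋯∘ζ^{(εₙ)}_{jₙ})(F) · (ζ^{(1-ε₁)}_{j₁}∘⋯∘ζ^{(1-εₙ)}_{jₙ})(G)`,
extended coefficientwise to `A[[ħ]]`. -/
noncomputable def symExpProd {R A : Type*} [CommRing R] [CommRing A] [Algebra R A] [Algebra ℚ A]
    {J : Type*} [Fintype J] [DecidableEq J] (ζ ζ' : J → Derivation R A A)
    (F G : PowerSeries A) : PowerSeries A :=
  PowerSeries.mk fun N =>
    ∑ mn ∈ Finset.HasAntidiagonal.antidiagonal N, ∑ ab ∈ Finset.HasAntidiagonal.antidiagonal mn.1,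
      ((2 : ℚ) ^ mn.2 * (mn.2.factorial : ℚ))⁻¹ •
        ∑ w : Fin mn.2 → J × Bool,
          compDer (ζsel ζ ζ') mn.2 w (PowerSeries.coeff (R := A) ab.1 F) *
            compDer (ζsel ζ ζ') mn.2 (fun i => ((w i).1, !(w i).2))
              (PowerSeries.coeff (R := A) ab.2 G)

/-! The operator `𝒟` obeys the Leibniz rule up to a remainder,
`𝒟(ab) = 𝒟a · b + a · 𝒟b + B(a, b)` with `B = Σ_j (ζ_j ⊗ ζ'_j + ζ'_j ⊗ ζ_j)`. Read on
two-argument functions `Φ(f, g)`, this says that applying `𝒟` after multiplication is the same as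
applying `L + R + B` before it, where `L` and `R` apply `𝒟` to the first and to the second
argument. Since the derivations commute, `L`, `R`, `B` commute with each other and with
post-composition by `𝒟`, so
`e^{t𝒟} ∘ mul ∘ (e^{-t𝒟} ⊗ e^{-t𝒟}) = mul ∘ e^{t(L+R+B)} e^{-tL} e^{-tR} = mul ∘ e^{tB}`.
At `t = ħ/2`, expanding `B^n` into words over the pairs `(ζ_j, ζ'_j)` gives the exponential
product; invertibility of `𝒯` is `e^{t𝒟} e^{-t𝒟} = 1`. -/

open PowerSeries Finset

theorem coeff_rescale_exp_smul {S : Type*} [CommRing S] [Algebra ℚ S] (t : ℚ) (u : S) (n : ℕ) :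
    coeff n (rescale (t • u) (exp S)) = coeff n (rescale t (exp ℚ)) • u ^ n := by
  simp only [coeff_rescale, coeff_exp, Algebra.smul_def, map_mul, map_pow,
    Algebra.algebraMap_self, RingHom.id_apply]
  ring

/-- The coefficient of `t^k` in `e^{t(x+y+z)} e^{-tx} e^{-ty} = e^{tz}`. -/
theorem sum_coeff_exp_smul_add_add_mul_pow_mul_pow {S : Type*} [CommRing S] [Algebra ℚ S]
    (t : ℚ) (x y z : S) (k : ℕ) :
    ∑ nr ∈ antidiagonal k, ∑ pq ∈ antidiagonal nr.2,
      (coeff nr.1 (rescale t (exp ℚ)) * (coeff pq.1 (rescale (-t) (exp ℚ)) *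
        coeff pq.2 (rescale (-t) (exp ℚ)))) • ((x + y + z) ^ nr.1 * (x ^ pq.1 * y ^ pq.2)) =
      coeff k (rescale t (exp ℚ)) • z ^ k := by
  have key : rescale (t • (x + y + z)) (exp S) *
      (rescale ((-t) • x) (exp S) * rescale ((-t) • y) (exp S)) = rescale (t • z) (exp S) := by
    rw [exp_mul_exp_eq_exp_add, exp_mul_exp_eq_exp_add,
      show t • (x + y + z) + ((-t) • x + (-t) • y) = t • z by module]
  rw [← coeff_rescale_exp_smul, ← key, coeff_mul]
  refine sum_congr rfl fun nr _ => ?_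
  rw [coeff_mul, mul_sum]
  refine sum_congr rfl fun pq _ => ?_
  simp only [coeff_rescale_exp_smul, smul_mul_smul_comm]

open scoped IsMulCommutative in
theorem sum_coeff_exp_smul_add_add_mul_pow_mul_pow_of_commute {S : Type*} [Ring S]
    [Algebra ℚ S] {x y z : S} (hxy : Commute x y) (hxz : Commute x z) (hyz : Commute y z)
    (t : ℚ) (k : ℕ) :
    ∑ nr ∈ antidiagonal k, ∑ pq ∈ antidiagonal nr.2,
      (coeff nr.1 (rescale t (exp ℚ)) * (coeff pq.1 (rescale (-t) (exp ℚ)) *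
        coeff pq.2 (rescale (-t) (exp ℚ)))) • ((x + y + z) ^ nr.1 * (x ^ pq.1 * y ^ pq.2)) =
      coeff k (rescale t (exp ℚ)) • z ^ k := by
  have hcomm : ∀ a ∈ ({x, y, z} : Set S), ∀ b ∈ ({x, y, z} : Set S), a * b = b * a := by
    simp only [Set.mem_insert_iff, Set.mem_singleton_iff]
    rintro a ha b hb
    rcases ha with rfl | rfl | rfl <;> rcases hb with rfl | rfl | rfl <;>
      first | rfl | simp only [hxy.eq, hxz.eq, hyz.eq]
  have := Algebra.isMulCommutative_adjoin ℚ hcomm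
  let T := Algebra.adjoin ℚ ({x, y, z} : Set S)
  have h := congrArg T.val (sum_coeff_exp_smul_add_add_mul_pow_mul_pow t
    (⟨x, Algebra.subset_adjoin (by simp)⟩ : T) ⟨y, Algebra.subset_adjoin (by simp)⟩
    ⟨z, Algebra.subset_adjoin (by simp)⟩ k)
  simpa only [map_sum, map_smul, map_mul, map_pow, map_add, Subalgebra.coe_val] using h

theorem rescale_exp_mul_rescale_neg_exp (t : ℚ) :
    rescale t (exp ℚ) * rescale (-t) (exp ℚ) = 1 := by
  rw [exp_mul_exp_eq_exp_add, add_neg_cancel, rescale_zero]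
  simp

theorem coeff_rescale_half_exp (n : ℕ) :
    coeff n (rescale (1 / 2 : ℚ) (exp ℚ)) = ((2 : ℚ) ^ n * (n.factorial : ℚ))⁻¹ := by
  simp [coeff_rescale, mul_comm]

theorem coeff_rescale_neg_half_exp (n : ℕ) :
    coeff n (rescale (-(1 / 2) : ℚ) (exp ℚ)) =
      (-1 : ℚ) ^ n * ((2 : ℚ) ^ n * (n.factorial : ℚ))⁻¹ := by
  rw [coeff_rescale, neg_pow, mul_assoc, ← coeff_rescale, coeff_rescale_half_exp]

section Reindex

variable {M : Type*} [AddCommMonoid M]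

theorem sum_antidiagonal_triple_assoc (N : ℕ) (g : ℕ → ℕ → ℕ → M) :
    ∑ x ∈ antidiagonal N, ∑ y ∈ antidiagonal x.1, g y.1 y.2 x.2 =
      ∑ x ∈ antidiagonal N, ∑ y ∈ antidiagonal x.2, g x.1 y.1 y.2 := by
  simp only [sum_sigma']
  refine sum_nbij' (fun p => ⟨(p.2.1, p.2.2 + p.1.2), (p.2.2, p.1.2)⟩)
    (fun p => ⟨(p.1.1 + p.2.1, p.2.2), (p.1.1, p.2.1)⟩) ?_ ?_ ?_ ?_ (fun _ _ => rfl) <;>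
  rintro ⟨⟨_, _⟩, ⟨_, _⟩⟩ h <;>
  simp only [mem_sigma, HasAntidiagonal.mem_antidiagonal, Sigma.mk.injEq, Prod.mk.injEq,
    heq_eq_eq, and_true, true_and] at h ⊢ <;>
  omega

theorem sum_antidiagonal_quadruple_regroup (N : ℕ) (T : ℕ → ℕ → ℕ → ℕ → ℕ → M) :
    ∑ mn ∈ antidiagonal N, ∑ uv ∈ antidiagonal mn.1, ∑ ap ∈ antidiagonal uv.1,
        ∑ bq ∈ antidiagonal uv.2, T ap.1 bq.1 mn.2 ap.2 bq.2 =
      ∑ mk ∈ antidiagonal N, ∑ ab ∈ antidiagonal mk.1, ∑ nr ∈ antidiagonal mk.2,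
        ∑ pq ∈ antidiagonal nr.2, T ab.1 ab.2 nr.1 pq.1 pq.2 := by
  simp only [sum_sigma']
  refine sum_nbij'
    (fun ⟨(_, n), _, (a, p), (b, q)⟩ => ⟨(a + b, n + (p + q)), (a, b), (n, p + q), (p, q)⟩)
    (fun ⟨_, (a, b), (n, _), (p, q)⟩ => ⟨(a + p + (b + q), n), (a + p, b + q), (a, p), (b, q)⟩)
    ?_ ?_ ?_ ?_ (fun _ _ => rfl) <;>
  rintro ⟨⟨_, _⟩, ⟨_, _⟩, ⟨_, _⟩, ⟨_, _⟩⟩ h <;>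
  simp only [mem_sigma, HasAntidiagonal.mem_antidiagonal, Sigma.mk.injEq, Prod.mk.injEq,
    heq_eq_eq, and_true, true_and] at h ⊢ <;>
  omega

end Reindex

section SeriesApply

variable {A : Type*} [Semiring A] [Module ℚ A]

/-- `P(ħD) F` for `P ∈ ℚ[[ħ]]`, with `D` acting coefficientwise on `F ∈ A[[ħ]]`. -/
noncomputable def seriesApply (P : ℚ⟦X⟧) (D : Module.End ℚ A) (F : A⟦X⟧) : A⟦X⟧ :=
  mk fun N => ∑ p ∈ antidiagonal N, coeff p.2 P • (D ^ p.2) (coeff p.1 F)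

theorem seriesApply_seriesApply (P Q : ℚ⟦X⟧) (D : Module.End ℚ A) (F : A⟦X⟧) :
    seriesApply P D (seriesApply Q D F) = seriesApply (P * Q) D F := by
  ext N
  simp only [seriesApply, coeff_mk, map_sum, map_smul, smul_sum, smul_smul,
    ← Module.End.mul_apply, ← pow_add]
  rw [sum_antidiagonal_triple_assoc N
    (fun a p n => (coeff n P * coeff p Q) • (D ^ (n + p)) (coeff a F)), mul_comm P Q]
  refine sum_congr rfl fun x _ => ?_
  rw [coeff_mul, sum_smul]
  refine sum_congr rfl fun y hy => ?_
  rw [mul_comm, add_comm, HasAntidiagonal.mem_antidiagonal.mp hy]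

theorem seriesApply_one (D : Module.End ℚ A) (F : A⟦X⟧) : seriesApply 1 D F = F := by
  ext N
  rw [seriesApply, coeff_mk, sum_eq_single_of_mem (N, 0) (by simp)]
  · simp
  · rintro ⟨a, b⟩ hab hne
    have hb : b ≠ 0 := by
      rintro rfl
      simp_all
    simp [coeff_one, hb]

end SeriesApply

section TwoArgumentOperators

variable {S X Y M : Type*} [CommSemiring S] [AddCommMonoid M] [Module S M]

def precomp₂ (u : X → X) (v : Y → Y) : Module.End S (X → Y → M) where
  toFun Φ x y := Φ (u x) (v y)
  map_add' _ _ := rfl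
  map_smul' _ _ := rfl

def postcomp₂ (D : Module.End S M) : Module.End S (X → Y → M) where
  toFun Φ x y := D (Φ x y)
  map_add' _ _ := by ext; simp
  map_smul' _ _ := by ext; simp

@[simp]
theorem precomp₂_apply (u : X → X) (v : Y → Y) (Φ : X → Y → M) (x : X) (y : Y) :
    precomp₂ (S := S) u v Φ x y = Φ (u x) (v y) := rfl

@[simp]
theorem postcomp₂_apply (D : Module.End S M) (Φ : X → Y → M) (x : X) (y : Y) :
    postcomp₂ D Φ x y = D (Φ x y) := rfl

theorem precomp₂_pow (u : X → X) (v : Y → Y) (n : ℕ) :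
    precomp₂ (S := S) (M := M) u v ^ n = precomp₂ u^[n] v^[n] := by
  induction n with
  | zero => rfl
  | succ n ih =>
    rw [pow_succ', ih]
    rfl

theorem postcomp₂_pow (D : Module.End S M) (n : ℕ) :
    postcomp₂ (X := X) (Y := Y) D ^ n = postcomp₂ (D ^ n) := by
  induction n with
  | zero => rfl
  | succ n ih =>
    rw [pow_succ, ih, pow_succ]
    rfl

theorem commute_precomp₂ {u u' : X → X} {v v' : Y → Y} (hu : Function.Commute u u')
    (hv : Function.Commute v v') :
    Commute (precomp₂ (S := S) (M := M) u v) (precomp₂ u' v') := by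
  ext Φ x y
  simp [hu x, hv y]

theorem commute_postcomp₂_precomp₂ (D : Module.End S M) (u : X → X) (v : Y → Y) :
    Commute (postcomp₂ D) (precomp₂ u v) :=
  LinearMap.ext fun _ => rfl

end TwoArgumentOperators

theorem Module.End.pow_mul_apply_eq_of_apply_eq {S V : Type*} [Semiring S] [AddCommMonoid V]
    [Module S V] {a b q : Module.End S V} {v : V} (hv : a v = b v) (hab : Commute a b)
    (haq : Commute a q) (hbq : Commute b q) (n : ℕ) : (a ^ n * q) v = (b ^ n * q) v := by
  have hpow : ∀ n : ℕ, (a ^ n) v = (b ^ n) v := by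
    intro n
    induction n with
    | zero => rfl
    | succ n ih =>
      rw [pow_succ, Module.End.mul_apply, hv, ← Module.End.mul_apply,
        (hab.pow_left n).eq, Module.End.mul_apply, ih, ← Module.End.mul_apply, ← pow_succ']
  rw [(haq.pow_left n).eq, (hbq.pow_left n).eq, Module.End.mul_apply, hpow, Module.End.mul_apply]

section Derivations

variable {R A : Type*} [CommRing R] [CommRing A] [Algebra R A]

theorem compDer_cons {I : Type*} (ξ : I → Derivation R A A) (k : ℕ) (x : I) (w : Fin k → I)
    (a : A) : compDer ξ (k + 1) (Fin.cons x w) a = ξ x (compDer ξ k w a) := by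
  simp only [compDer, Fin.cons_zero, Fin.cons_succ]

theorem sum_precomp₂_pow_apply [Algebra ℚ A] {I : Type*} [Fintype I] (ξ : I → Derivation R A A)
    (σ : I → I) (k : ℕ) (Φ : A → A → A) (f g : A) :
    ((∑ x, precomp₂ (S := ℚ) (ξ x) (ξ (σ x))) ^ k) Φ f g =
      ∑ w : Fin k → I, Φ (compDer ξ k w f) (compDer ξ k (fun i => σ (w i)) g) := by
  induction k generalizing Φ with
  | zero => simp [compDer]
  | succ k ih =>
    rw [pow_succ, Module.End.mul_apply, ih, ← (Fin.consEquiv fun _ => I).sum_comp,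
      Fintype.sum_prod_type, sum_comm]
    refine sum_congr rfl fun w _ => ?_
    simp only [LinearMap.sum_apply, Finset.sum_apply, precomp₂_apply, Fin.consEquiv_apply]
    refine sum_congr rfl fun x _ => ?_
    rw [← compDer_cons, ← compDer_cons]
    congr 2
    ext i
    cases i using Fin.cases <;> rfl

theorem function_commute_ζsel {J : Type*} {ζ ζ' : J → Derivation R A A}
    (hζζ : ∀ i j : J, ∀ a : A, ζ i (ζ j a) = ζ j (ζ i a))
    (hζζ' : ∀ i j : J, ∀ a : A, ζ i (ζ' j a) = ζ' j (ζ i a))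
    (hζ'ζ' : ∀ i j : J, ∀ a : A, ζ' i (ζ' j a) = ζ' j (ζ' i a)) (x y : J × Bool) :
    Function.Commute (ζsel ζ ζ' x) (ζsel ζ ζ' y) := by
  rcases x with ⟨i, _ | _⟩ <;> rcases y with ⟨j, _ | _⟩ <;> intro a
  · exact hζζ i j a
  · exact hζζ' i j a
  · exact (hζζ' j i a).symm
  · exact hζ'ζ' i j a

variable {J : Type*} [Fintype J] (ζ ζ' : J → Derivation R A A)

theorem Dop_add (a b : A) : Dop ζ ζ' (a + b) = Dop ζ ζ' a + Dop ζ ζ' b := by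
  simp [Dop, sum_add_distrib]

theorem Dop_mul (a b : A) :
    Dop ζ ζ' (a * b) = Dop ζ ζ' a * b + a * Dop ζ ζ' b +
      ∑ x : J × Bool, ζsel ζ ζ' x a * ζsel ζ ζ' (x.1, !x.2) b := by
  simp only [Dop, Fintype.sum_prod_type, sum_mul, mul_sum, ← sum_add_distrib]
  refine sum_congr rfl fun j _ => ?_
  simp only [ζsel, Fintype.sum_bool, Derivation.leibniz, smul_eq_mul, map_add, ↓reduceIte,
    Bool.not_true, Bool.false_eq_true, Bool.not_false]
  ring

variable {ζ ζ'} in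
theorem function_commute_Dop_ζsel
    (hsel : ∀ x y, Function.Commute (ζsel ζ ζ' x) (ζsel ζ ζ' y)) (x : J × Bool) :
    Function.Commute (Dop ζ ζ') (ζsel ζ ζ' x) := by
  intro a
  change ∑ j, ζsel ζ ζ' (j, false) (ζsel ζ ζ' (j, true) _) =
    ζsel ζ ζ' x (∑ j, ζsel ζ ζ' (j, false) (ζsel ζ ζ' (j, true) a))
  rw [map_sum]
  refine sum_congr rfl fun j _ => ?_
  rw [← hsel x, ← hsel x]

variable [Algebra ℚ A]

noncomputable def dopLinear : Module.End ℚ A :=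
  (AddMonoidHom.mk' (Dop ζ ζ') (Dop_add ζ ζ')).toRatLinearMap

theorem dopLinear_pow_apply (n : ℕ) (a : A) : (dopLinear ζ ζ' ^ n) a = (Dop ζ ζ')^[n] a := by
  rw [Module.End.pow_apply]
  rfl

theorem tmap_eq_seriesApply :
    Tmap ζ ζ' = seriesApply (rescale (1 / 2) (exp ℚ)) (dopLinear ζ ζ') := by
  ext F N
  simp only [Tmap, seriesApply, coeff_mk, coeff_rescale_half_exp, dopLinear_pow_apply]

theorem tinv_eq_seriesApply :
    Tinv ζ ζ' = seriesApply (rescale (-(1 / 2)) (exp ℚ)) (dopLinear ζ ζ') := by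
  ext F N
  simp only [Tinv, seriesApply, coeff_mk, coeff_rescale_neg_half_exp, dopLinear_pow_apply]

/-- Twice the symmetrized bidifferential operator `D` of the statement. -/
noncomputable def symBidiff : Module.End ℚ (A → A → A) :=
  ∑ x : J × Bool, precomp₂ (ζsel ζ ζ' x) (ζsel ζ ζ' (x.1, !x.2))

variable {ζ ζ'}

/-- The coefficient of `t^k` in `e^{t𝒟}(e^{-t𝒟} f · e^{-t𝒟} g) = mul (e^{t·symBidiff} (f, g))`
at `t = 1/2`. -/
theorem sum_coeff_exp_dopLinear_pow_mul
    (hsel : ∀ x y, Function.Commute (ζsel ζ ζ' x) (ζsel ζ ζ' y)) (k : ℕ) (f g : A) :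
    ∑ nr ∈ antidiagonal k, ∑ pq ∈ antidiagonal nr.2,
      (coeff nr.1 (rescale (1 / 2 : ℚ) (exp ℚ)) * (coeff pq.1 (rescale (-(1 / 2) : ℚ) (exp ℚ)) *
        coeff pq.2 (rescale (-(1 / 2) : ℚ) (exp ℚ)))) •
        (dopLinear ζ ζ' ^ nr.1) ((dopLinear ζ ζ' ^ pq.1) f * (dopLinear ζ ζ' ^ pq.2) g) =
      coeff k (rescale (1 / 2 : ℚ) (exp ℚ)) • ∑ w : Fin k → J × Bool,
        compDer (ζsel ζ ζ') k w f * compDer (ζsel ζ ζ') k (fun i => ((w i).1, !(w i).2)) g := by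
  set 𝓛 : Module.End ℚ (A → A → A) := precomp₂ (Dop ζ ζ') id
  set 𝓡 : Module.End ℚ (A → A → A) := precomp₂ id (Dop ζ ζ')
  set 𝓑 := symBidiff ζ ζ'
  set 𝓓 : Module.End ℚ (A → A → A) := postcomp₂ (dopLinear ζ ζ')
  have hLR : Commute 𝓛 𝓡 := commute_precomp₂ Function.Commute.id_right Function.Commute.id_left
  have hLB : Commute 𝓛 𝓑 := Commute.sum_right _ _ _ fun x _ =>
    commute_precomp₂ (function_commute_Dop_ζsel hsel x) Function.Commute.id_left
  have hRB : Commute 𝓡 𝓑 := Commute.sum_right _ _ _ fun x _ =>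
    commute_precomp₂ Function.Commute.id_left (function_commute_Dop_ζsel hsel _)
  have hSL : Commute (𝓛 + 𝓡 + 𝓑) 𝓛 := ((Commute.refl 𝓛).add_left hLR.symm).add_left hLB.symm
  have hSR : Commute (𝓛 + 𝓡 + 𝓑) 𝓡 := (hLR.add_left (Commute.refl 𝓡)).add_left hRB.symm
  have hDL : Commute 𝓓 𝓛 := commute_postcomp₂_precomp₂ _ _ _
  have hDR : Commute 𝓓 𝓡 := commute_postcomp₂_precomp₂ _ _ _
  have hDB : Commute 𝓓 𝓑 := Commute.sum_right _ _ _ fun x _ => commute_postcomp₂_precomp₂ _ _ _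
  have leibniz : 𝓓 (· * ·) = (𝓛 + 𝓡 + 𝓑) (· * ·) := by
    ext a b
    simp only [𝓛, 𝓡, 𝓑, 𝓓, symBidiff, postcomp₂_apply, LinearMap.add_apply, Pi.add_apply,
      LinearMap.sum_apply, Finset.sum_apply, precomp₂_apply, id]
    exact Dop_mul ζ ζ' a b
  have hterm : ∀ n p q, (dopLinear ζ ζ' ^ n) ((dopLinear ζ ζ' ^ p) f * (dopLinear ζ ζ' ^ q) g) =
      ((𝓓 ^ n * (𝓛 ^ p * 𝓡 ^ q)) (· * ·)) f g := by
    intro n p q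
    simp only [𝓓, 𝓛, 𝓡, postcomp₂_pow, precomp₂_pow, Module.End.mul_apply, postcomp₂_apply,
      precomp₂_apply, Function.iterate_id, id, dopLinear_pow_apply]
  calc _ = ∑ nr ∈ antidiagonal k, ∑ pq ∈ antidiagonal nr.2,
        (coeff nr.1 (rescale (1 / 2 : ℚ) (exp ℚ)) * (coeff pq.1 (rescale (-(1 / 2) : ℚ) (exp ℚ)) *
          coeff pq.2 (rescale (-(1 / 2) : ℚ) (exp ℚ)))) •
          (((𝓛 + 𝓡 + 𝓑) ^ nr.1 * (𝓛 ^ pq.1 * 𝓡 ^ pq.2)) (· * ·)) f g := by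
        refine sum_congr rfl fun nr _ => sum_congr rfl fun pq _ => ?_
        rw [hterm, Module.End.pow_mul_apply_eq_of_apply_eq leibniz
          ((hDL.add_right hDR).add_right hDB) ((hDL.pow_right _).mul_right (hDR.pow_right _))
          ((hSL.pow_right _).mul_right (hSR.pow_right _))]
    _ = ((coeff k (rescale (1 / 2 : ℚ) (exp ℚ)) • 𝓑 ^ k) (· * ·)) f g := by
        rw [← sum_coeff_exp_smul_add_add_mul_pow_mul_pow_of_commute hLR hLB hRB]
        simp only [LinearMap.sum_apply, Finset.sum_apply, LinearMap.smul_apply, Pi.smul_apply]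
    _ = _ := by
        simp only [𝓑, symBidiff, LinearMap.smul_apply, Pi.smul_apply, sum_precomp₂_pow_apply]

theorem tmap_tinv_mul_tinv [DecidableEq J]
    (hsel : ∀ x y, Function.Commute (ζsel ζ ζ' x) (ζsel ζ ζ' y)) (F G : A⟦X⟧) :
    Tmap ζ ζ' (Tinv ζ ζ' F * Tinv ζ ζ' G) = symExpProd ζ ζ' F G := by
  ext N
  simp only [tmap_eq_seriesApply, tinv_eq_seriesApply, seriesApply, symExpProd, coeff_mk,
    coeff_mul, sum_mul_sum, smul_mul_smul_comm, map_sum, map_smul, smul_sum, smul_smul]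
  rw [sum_antidiagonal_quadruple_regroup N fun a b n p q =>
    (coeff n (rescale (1 / 2 : ℚ) (exp ℚ)) * (coeff p (rescale (-(1 / 2) : ℚ) (exp ℚ)) *
      coeff q (rescale (-(1 / 2) : ℚ) (exp ℚ)))) •
      (dopLinear ζ ζ' ^ n) ((dopLinear ζ ζ' ^ p) (coeff a F) * (dopLinear ζ ζ' ^ q) (coeff b G))]
  refine sum_congr rfl fun mk _ => sum_congr rfl fun ab _ => ?_
  rw [sum_coeff_exp_dopLinear_pow_mul hsel, coeff_rescale_half_exp, smul_sum]

end Derivations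

theorem timeOrdered_product_is_exponential_general
    {R A J : Type*} [CommRing R] [CommRing A] [Algebra R A] [Algebra ℚ A]
    [Fintype J] [DecidableEq J]
    (ζ ζ' : J → Derivation R A A)
    (hζζ : ∀ i j : J, ∀ a : A, ζ i (ζ j a) = ζ j (ζ i a))
    (hζζ' : ∀ i j : J, ∀ a : A, ζ i (ζ' j a) = ζ' j (ζ i a))
    (hζ'ζ' : ∀ i j : J, ∀ a : A, ζ' i (ζ' j a) = ζ' j (ζ' i a)) :
    (∀ F : PowerSeries A, Tmap ζ ζ' (Tinv ζ ζ' F) = F ∧ Tinv ζ ζ' (Tmap ζ ζ' F) = F) ∧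
    (∀ F G : PowerSeries A,
      Tmap ζ ζ' (Tinv ζ ζ' F * Tinv ζ ζ' G) = symExpProd ζ ζ' F G) := by
  refine ⟨fun F => ⟨?_, ?_⟩, tmap_tinv_mul_tinv (function_commute_ζsel hζζ hζζ' hζ'ζ')⟩
  · rw [tmap_eq_seriesApply, tinv_eq_seriesApply, seriesApply_seriesApply,
      rescale_exp_mul_rescale_neg_exp, seriesApply_one]
  · rw [tmap_eq_seriesApply, tinv_eq_seriesApply, seriesApply_seriesApply,
      ← neg_neg (1 / 2 : ℚ), neg_neg (-(1 / 2) : ℚ), rescale_exp_mul_rescale_neg_exp,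
      seriesApply_one]

/-- `𝒯 = e^{(ħ/2)𝒟}` is bijective with inverse `e^{-(ħ/2)𝒟}`, and the
time-ordered product `F ·_𝒯 G = 𝒯(𝒯⁻¹F · 𝒯⁻¹G)` is the exponential product determined by the
symmetrized bidifferential operator `D(F⊗G) = (1/2) Σ_j (ζ_j F ⊗ ζ'_j G + ζ'_j F ⊗ ζ_j G)`. -/
theorem timeOrdered_product_is_exponential
    {R A J : Type*} [CommRing R] [Algebra ℚ R] [CommRing A] [Algebra R A] [Algebra ℚ A]
    [IsScalarTower ℚ R A] [Fintype J] [DecidableEq J]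
    (ζ ζ' : J → Derivation R A A)
    (hζζ : ∀ i j : J, ∀ a : A, ζ i (ζ j a) = ζ j (ζ i a))
    (hζζ' : ∀ i j : J, ∀ a : A, ζ i (ζ' j a) = ζ' j (ζ i a))
    (hζ'ζ' : ∀ i j : J, ∀ a : A, ζ' i (ζ' j a) = ζ' j (ζ' i a)) :
    (∀ F : PowerSeries A, Tmap ζ ζ' (Tinv ζ ζ' F) = F ∧ Tinv ζ ζ' (Tmap ζ ζ' F) = F) ∧
    (∀ F G : PowerSeries A,
      Tmap ζ ζ' (Tinv ζ ζ' F * Tinv ζ ζ' G) = symExpProd ζ ζ' F G) :=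
  timeOrdered_product_is_exponential_general ζ ζ' hζζ hζζ' hζ'ζ'
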